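/- Let a, b ∈ ℝ with b² < a². Then there exist m, n ∈ ℝ such that the function F = G3 + m·C1 + n·C2 : ℝ^6 → ℝ has vanishing derivative at the equilibrium e = (a, 0, 0, b, 0, 0), and the Hessian quadratic form of F at e is positive definite on the subspace W = {v ∈ ℝ^6 : dC1(e)(v) = 0 and dC2(e)(v) = 0}, i.e., d²F(e)(v,v) > 0 for every nonzero v ∈ W. (Hence F is a Lyapunov function proving the nonlinear stability of e.) -/

import Mathlib

noncomputable section

/-- Casimir `C1`. -/
def C1fun (p : Fin 6 → ℝ) : ℝ :=
  (p 0 ^ 2 + p 1 ^ 2 + p 2 ^ 2 + p 3 ^ 2 + p 4 ^ 2 + p 5 ^ 2) / 2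

/-- Casimir `C2`. -/
def C2fun (p : Fin 6 → ℝ) : ℝ := p 0 * p 3 + p 1 * p 4 + p 2 * p 5

/-- The constant of motion `G3`. -/
def G3fun (l1 l2 l3 l4 : ℝ) (p : Fin 6 → ℝ) : ℝ :=
  p 0 ^ 2 / (l3^2 - l2^2) + p 1 ^ 2 / (l3^2 - l1^2) + p 5 ^ 2 / (l3^2 - l4^2)

/-!
`F = G3 + m C1 + n C2` is a quadratic form `Q` on `ℝ⁶`, so `dF(x)(v) = polar Q x v` and
`d²F(x)(v, v) = 2 Q(v)`. Coordinates are indexed `0, …, 5` for `(x1, x2, x3, y1, y2, y3)`.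
At `e = (a, 0, 0, b, 0, 0)`, `dF(e) = 0` amounts to `m a + n b + 2a/(λ3² − λ2²) = 0` and
`m b + n a = 0`; as `b² < a²` these have a solution with `m > 0` and
`n² = m² + 2m/(λ3² − λ2²)`. Also because `b² < a²`, `W` is cut out by `v₀ = v₃ = 0`, and there
`F` splits into binary forms in `(v₄, v₁)` and `(v₂, v₅)` with leading coefficient `m/2`. Their
discriminants are negative since `λ3² − λ1² < λ3² − λ2² < 0 < λ3² − λ4²`.
-/

namespace QuadraticMap

variable {E : Type*} [NormedAddCommGroup E] [NormedSpace ℝ E] [FiniteDimensional ℝ E]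
  (Q : QuadraticForm ℝ E)

def polarCLM : E →L[ℝ] E →L[ℝ] ℝ :=
  LinearMap.toContinuousLinearMap
    ((LinearMap.toContinuousLinearMap : (E →ₗ[ℝ] ℝ) ≃ₗ[ℝ] E →L[ℝ] ℝ).toLinearMap ∘ₗ polarBilin Q)

@[simp]
theorem polarCLM_apply_apply (x y : E) : polarCLM Q x y = polar Q x y := rfl

theorem hasFDerivAt_polarCLM (x : E) : HasFDerivAt Q (polarCLM Q x) x := by
  have hQ : ⇑Q = fun y => (1 / 2 : ℝ) * polarCLM Q (id y) (id y) := by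
    funext y
    simp [polar_self]
  have h := ((polarCLM Q).hasFDerivAt_of_bilinear (hasFDerivAt_id x) (hasFDerivAt_id x)).const_mul
    (1 / 2 : ℝ)
  rw [hQ]
  refine h.congr_fderiv (ContinuousLinearMap.ext fun v => ?_)
  simp only [id_eq, ContinuousLinearMap.precompR_apply, ContinuousLinearMap.compL_apply,
    ContinuousLinearMap.comp_id, smul_add, add_apply, smul_apply, polarCLM_apply_apply,
    smul_eq_mul, ContinuousLinearMap.precompL_apply, ContinuousLinearMap.id_apply, polar_comm Q v x]
  ring

theorem fderiv_eq_polarCLM : fderiv ℝ Q = polarCLM Q :=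
  funext fun x => (hasFDerivAt_polarCLM Q x).fderiv

theorem fderiv_apply (x v : E) : fderiv ℝ Q x v = polar Q x v := by
  rw [fderiv_eq_polarCLM, polarCLM_apply_apply]

theorem fderiv_fderiv_apply_self (x v : E) : fderiv ℝ (fderiv ℝ Q) x v v = 2 * Q v := by
  rw [fderiv_eq_polarCLM, ContinuousLinearMap.fderiv, polarCLM_apply_apply, polar_self,
    two_nsmul, two_mul]

end QuadraticMap

theorem binary_quadratic_nonneg {p q r : ℝ} (hp : 0 < p) (hpqr : q ^ 2 ≤ p * r) (x y : ℝ) :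
    0 ≤ p * x ^ 2 + 2 * q * x * y + r * y ^ 2 := by
  nlinarith [sq_nonneg (p * x + q * y), sq_nonneg y]

theorem binary_quadratic_pos {p q r : ℝ} (hp : 0 < p) (hpqr : q ^ 2 < p * r) {x y : ℝ}
    (hxy : x ≠ 0 ∨ y ≠ 0) : 0 < p * x ^ 2 + 2 * q * x * y + r * y ^ 2 := by
  have key : p * (p * x ^ 2 + 2 * q * x * y + r * y ^ 2) =
      (p * x + q * y) ^ 2 + (p * r - q ^ 2) * y ^ 2 := by
    ring
  rcases eq_or_ne y 0 with rfl | hy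
  · have hx : x ≠ 0 := by simpa using hxy
    have : 0 < x ^ 2 := by positivity
    simpa using mul_pos hp this
  · refine pos_of_mul_pos_right (a := p) ?_ hp.le
    rw [key]
    have := mul_pos (sub_pos.2 hpqr) (by positivity : 0 < y ^ 2)
    positivity

theorem eq_zero_of_det_ne_zero {a b c d x y : ℝ} (hdet : a * d - b * c ≠ 0)
    (h₁ : a * x + b * y = 0) (h₂ : c * x + d * y = 0) : x = 0 ∧ y = 0 := by
  constructor
  · apply (mul_eq_zero.1 (_ : (a * d - b * c) * x = 0)).resolve_left hdet
    linear_combination d * h₁ - b * h₂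
  · apply (mul_eq_zero.1 (_ : (a * d - b * c) * y = 0)).resolve_left hdet
    linear_combination a * h₂ - c * h₁

theorem exists_critical_multipliers {a b d : ℝ} (hd : d < 0) (hab : b ^ 2 < a ^ 2) :
    ∃ m n : ℝ, 0 < m ∧ m * a + n * b + 2 * a / d = 0 ∧ m * b + n * a = 0 ∧
      n ^ 2 = m ^ 2 + 2 * m / d := by
  have hab' : 0 < a ^ 2 - b ^ 2 := sub_pos.2 hab
  have ha : a ≠ 0 := by rintro rfl; nlinarith [sq_nonneg b]
  have hd' : d ≠ 0 := hd.ne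
  refine ⟨-(2 * a ^ 2) / (d * (a ^ 2 - b ^ 2)), 2 * a * b / (d * (a ^ 2 - b ^ 2)), ?_, ?_, ?_, ?_⟩
  · exact div_pos_of_neg_of_neg (by nlinarith) (mul_neg_of_neg_of_pos hd hab')
  all_goals field_simp
  all_goals ring

open QuadraticMap

def C1form : QuadraticForm ℝ (Fin 6 → ℝ) := (1 / 2 : ℝ) • ∑ i, proj (R := ℝ) i i

def C2form : QuadraticForm ℝ (Fin 6 → ℝ) :=
  proj (R := ℝ) 0 3 + proj (R := ℝ) 1 4 + proj (R := ℝ) 2 5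

def G3form (l1 l2 l3 l4 : ℝ) : QuadraticForm ℝ (Fin 6 → ℝ) :=
  (l3 ^ 2 - l2 ^ 2)⁻¹ • proj (R := ℝ) 0 0 + (l3 ^ 2 - l1 ^ 2)⁻¹ • proj (R := ℝ) 1 1 +
    (l3 ^ 2 - l4 ^ 2)⁻¹ • proj (R := ℝ) 5 5

theorem coe_C1form : ⇑C1form = C1fun := by
  funext p
  simp [C1form, C1fun, Fin.sum_univ_six]
  ring

theorem coe_C2form : ⇑C2form = C2fun := by
  funext p
  simp [C2form, C2fun]

theorem coe_G3form (l1 l2 l3 l4 : ℝ) : ⇑(G3form l1 l2 l3 l4) = G3fun l1 l2 l3 l4 := by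
  funext p
  simp [G3form, G3fun]
  ring

theorem coe_G3form_add_smul (l1 l2 l3 l4 m n : ℝ) :
    ⇑(G3form l1 l2 l3 l4 + m • C1form + n • C2form) =
      fun p => G3fun l1 l2 l3 l4 p + m * C1fun p + n * C2fun p := by
  funext p
  simp [← coe_G3form, ← coe_C1form, ← coe_C2form]

theorem fderiv_C1fun_apply (x v : Fin 6 → ℝ) :
    fderiv ℝ C1fun x v =
      x 0 * v 0 + x 1 * v 1 + x 2 * v 2 + x 3 * v 3 + x 4 * v 4 + x 5 * v 5 := by
  rw [← coe_C1form, QuadraticMap.fderiv_apply, polar, coe_C1form]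
  simp only [C1fun, Pi.add_apply]
  ring

theorem fderiv_C2fun_apply (x v : Fin 6 → ℝ) :
    fderiv ℝ C2fun x v =
      x 0 * v 3 + x 3 * v 0 + x 1 * v 4 + x 4 * v 1 + x 2 * v 5 + x 5 * v 2 := by
  rw [← coe_C2form, QuadraticMap.fderiv_apply, polar, coe_C2form]
  simp only [C2fun, Pi.add_apply]
  ring

theorem fderiv_G3fun_add_apply (l1 l2 l3 l4 m n : ℝ) (x v : Fin 6 → ℝ) :
    fderiv ℝ (fun p => G3fun l1 l2 l3 l4 p + m * C1fun p + n * C2fun p) x v =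
      2 * (x 0 * v 0 / (l3 ^ 2 - l2 ^ 2) + x 1 * v 1 / (l3 ^ 2 - l1 ^ 2) +
          x 5 * v 5 / (l3 ^ 2 - l4 ^ 2)) +
        m * (x 0 * v 0 + x 1 * v 1 + x 2 * v 2 + x 3 * v 3 + x 4 * v 4 + x 5 * v 5) +
        n * (x 0 * v 3 + x 3 * v 0 + x 1 * v 4 + x 4 * v 1 + x 2 * v 5 + x 5 * v 2) := by
  rw [← coe_G3form_add_smul, QuadraticMap.fderiv_apply, polar, coe_G3form_add_smul]
  simp only [G3fun, C1fun, C2fun, Pi.add_apply]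
  ring

theorem fderiv_fderiv_G3fun_add_apply_self (l1 l2 l3 l4 m n : ℝ) (x v : Fin 6 → ℝ) :
    fderiv ℝ (fderiv ℝ (fun p => G3fun l1 l2 l3 l4 p + m * C1fun p + n * C2fun p)) x v v =
      2 * (G3fun l1 l2 l3 l4 v + m * C1fun v + n * C2fun v) := by
  rw [← coe_G3form_add_smul, QuadraticMap.fderiv_fderiv_apply_self, coe_G3form_add_smul]

theorem G3fun_add_pos {l1 l2 l3 l4 m n : ℝ} (hm : 0 < m)
    (h₁ : n ^ 2 < m ^ 2 + 2 * m / (l3 ^ 2 - l1 ^ 2))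
    (h₄ : n ^ 2 < m ^ 2 + 2 * m / (l3 ^ 2 - l4 ^ 2))
    {v : Fin 6 → ℝ} (hv : v ≠ 0) (hv₀ : v 0 = 0) (hv₃ : v 3 = 0) :
    0 < G3fun l1 l2 l3 l4 v + m * C1fun v + n * C2fun v := by
  have hsplit : G3fun l1 l2 l3 l4 v + m * C1fun v + n * C2fun v =
      (m / 2 * v 4 ^ 2 + 2 * (n / 2) * v 4 * v 1 + (m / 2 + 1 / (l3 ^ 2 - l1 ^ 2)) * v 1 ^ 2) +
      (m / 2 * v 2 ^ 2 + 2 * (n / 2) * v 2 * v 5 + (m / 2 + 1 / (l3 ^ 2 - l4 ^ 2)) * v 5 ^ 2) := by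
    simp only [G3fun, C1fun, C2fun, hv₀, hv₃]
    ring
  have hdisc {d : ℝ} (h : n ^ 2 < m ^ 2 + 2 * m / d) : (n / 2) ^ 2 < m / 2 * (m / 2 + 1 / d) := by
    have : m / 2 * (m / 2 + 1 / d) = (m ^ 2 + 2 * m / d) / 4 := by ring
    rw [this]
    linarith
  have hm2 : 0 < m / 2 := half_pos hm
  have hnz : (v 4 ≠ 0 ∨ v 1 ≠ 0) ∨ (v 2 ≠ 0 ∨ v 5 ≠ 0) := by
    by_contra! h
    obtain ⟨⟨h4, h1⟩, h2, h5⟩ := h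
    exact hv (funext fun i => by fin_cases i <;> simp [*])
  rw [hsplit]
  rcases hnz with h | h
  · exact add_pos_of_pos_of_nonneg (binary_quadratic_pos hm2 (hdisc h₁) h)
      (binary_quadratic_nonneg hm2 (hdisc h₄).le _ _)
  · exact add_pos_of_nonneg_of_pos (binary_quadratic_nonneg hm2 (hdisc h₁).le _ _)
      (binary_quadratic_pos hm2 (hdisc h₄) h)

theorem G3_lyapunov_function_general
    (l1 l2 l3 l4 : ℝ) (h12 : l2 < l1) (h23 : l3 < l2) (h34 : l4 < l3)
    (s12 : 0 < l1 + l2)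
    (s23 : 0 < l2 + l3) (s34 : 0 < l3 + l4)
    (a b : ℝ) (hba : b ^ 2 < a ^ 2) :
    ∃ m n : ℝ,
      fderiv ℝ (fun p => G3fun l1 l2 l3 l4 p + m * C1fun p + n * C2fun p)
          ![a, 0, 0, b, 0, 0] = 0 ∧
      ∀ v : Fin 6 → ℝ, v ≠ 0 →
        fderiv ℝ C1fun ![a, 0, 0, b, 0, 0] v = 0 →
        fderiv ℝ C2fun ![a, 0, 0, b, 0, 0] v = 0 →
        0 < fderiv ℝ (fderiv ℝ (fun p => G3fun l1 l2 l3 l4 p + m * C1fun p + n * C2fun p))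
              ![a, 0, 0, b, 0, 0] v v := by
  have h₁₂ : l3 ^ 2 - l1 ^ 2 < l3 ^ 2 - l2 ^ 2 := by nlinarith
  have h₂₃ : l3 ^ 2 - l2 ^ 2 < 0 := by nlinarith
  have h₃₄ : 0 < l3 ^ 2 - l4 ^ 2 := by nlinarith
  obtain ⟨m, n, hm, h₀, h₃, hmn⟩ := exists_critical_multipliers h₂₃ hba
  refine ⟨m, n, ?_, fun v hv hC1 hC2 => ?_⟩
  · ext v
    rw [fderiv_G3fun_add_apply]
    simp only [Matrix.cons_val_zero, Matrix.cons_val_one, Matrix.cons_val, zero_mul, zero_div,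
      add_zero, zero_apply]
    linear_combination v 0 * h₀ + v 3 * h₃
  have hv₀₃ : v 0 = 0 ∧ v 3 = 0 := by
    rw [fderiv_C1fun_apply] at hC1
    rw [fderiv_C2fun_apply] at hC2
    simp only [Matrix.cons_val_zero, Matrix.cons_val_one, Matrix.cons_val, zero_mul,
      add_zero] at hC1 hC2
    exact eq_zero_of_det_ne_zero (by nlinarith) hC1 (by linarith : b * v 0 + a * v 3 = 0)
  rw [fderiv_fderiv_G3fun_add_apply_self]
  refine mul_pos two_pos (G3fun_add_pos hm ?_ ?_ hv hv₀₃.1 hv₀₃.2) <;> rw [hmn]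
  · have := mul_lt_mul_of_pos_left (one_div_lt_one_div_of_neg_of_lt h₂₃ h₁₂)
      (by positivity : 0 < 2 * m)
    simp only [mul_one_div] at this
    linarith
  · have : 2 * m / (l3 ^ 2 - l2 ^ 2) < 0 := div_neg_of_pos_of_neg (by positivity) h₂₃
    have : 0 < 2 * m / (l3 ^ 2 - l4 ^ 2) := by positivity
    linarith

/-- `G3 + m C1 + n C2` is a Lyapunov function for the equilibrium
`(a,0,0,b,0,0)`: its derivative vanishes there, and its Hessian is positive definite
on `W = ker dC1(e) ∩ ker dC2(e)`. -/
theorem G3_lyapunov_function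
    (l1 l2 l3 l4 : ℝ) (h12 : l2 < l1) (h23 : l3 < l2) (h34 : l4 < l3)
    (s12 : 0 < l1 + l2) (s13 : 0 < l1 + l3) (s14 : 0 < l1 + l4)
    (s23 : 0 < l2 + l3) (s24 : 0 < l2 + l4) (s34 : 0 < l3 + l4)
    (a b : ℝ) (hba : b ^ 2 < a ^ 2) :
    ∃ m n : ℝ,
      fderiv ℝ (fun p => G3fun l1 l2 l3 l4 p + m * C1fun p + n * C2fun p)
          ![a, 0, 0, b, 0, 0] = 0 ∧
      ∀ v : Fin 6 → ℝ, v ≠ 0 →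
        fderiv ℝ C1fun ![a, 0, 0, b, 0, 0] v = 0 →
        fderiv ℝ C2fun ![a, 0, 0, b, 0, 0] v = 0 →
        0 < fderiv ℝ (fderiv ℝ (fun p => G3fun l1 l2 l3 l4 p + m * C1fun p + n * C2fun p))
              ![a, 0, 0, b, 0, 0] v v :=
  G3_lyapunov_function_general l1 l2 l3 l4 h12 h23 h34 s12 s23 s34 a b hba
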